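/- arXiv:1706.07227 — 7 statements merged into one kernel-verified Lean document; each statement's English description precedes it below -/
import Mathlib

section
/- Let (G,X) be a minimal topological dynamical system and let d ≥ 1. Then the action of the Host–Kra cube group HK^[d] on C_G^[d](X) is minimal: C_G^[d](X) is HK^[d]-invariant and every HK^[d]-orbit in C_G^[d](X) is dense in C_G^[d](X). -/
/-- Generators of the Host–Kra cube group: `[h]_F` for `F` a hyperface `{ω : ω i = a}`. -/
def hyperfaceGens (G : Type*) [Group G] (d : ℕ) : Set ((Fin d → Bool) → G) :=
  {g | ∃ (h : G) (i : Fin d) (a : Bool), g = fun ω => if ω i = a then h else 1}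

/-- Generators of the face cube group: `[h]_F` for `F` an upper hyperface `{ω : ω i = 1}`. -/
def upperFaceGens (G : Type*) [Group G] (d : ℕ) : Set ((Fin d → Bool) → G) :=
  {g | ∃ (h : G) (i : Fin d), g = fun ω => if ω i = true then h else 1}

/-- The Host–Kra cube group `HK^[d]`. -/
def HK (G : Type*) [Group G] (d : ℕ) : Subgroup ((Fin d → Bool) → G) :=
  Subgroup.closure (hyperfaceGens G d)

/-- The face cube group `F^[d]`. -/
def FG (G : Type*) [Group G] (d : ℕ) : Subgroup ((Fin d → Bool) → G) :=
  Subgroup.closure (upperFaceGens G d)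

/-- Coordinatewise action of `G^[d]` on `X^[d]`. -/
def cubeAct {G X : Type*} [Group G] [MulAction G X] {d : ℕ}
    (g : (Fin d → Bool) → G) (c : (Fin d → Bool) → X) : (Fin d → Bool) → X :=
  fun ω => g ω • c ω

/-- The dynamical cubespace `C_G^[d](X)`: the closure of the set of `HK^[d]`-translates
of constant configurations. -/
def cubeSpace (G X : Type*) [Group G] [MulAction G X] [TopologicalSpace X] (d : ℕ) :
    Set ((Fin d → Bool) → X) :=
  closure {c | ∃ g ∈ HK G d, ∃ x : X, c = cubeAct g (fun _ => x)}

/-- The lower corner `⌞^[d](x,y)`: value `y` at `1⃗`, value `x` elsewhere. -/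
def lowerCorner {X : Type*} (d : ℕ) (x y : X) : (Fin d → Bool) → X :=
  fun ω => if ω = (fun _ => true) then y else x

/-- The upper corner `⌝^[d](x,y)`: value `x` at `0⃗`, value `y` elsewhere. -/
def upperCorner {X : Type*} (d : ℕ) (x y : X) : (Fin d → Bool) → X :=
  fun ω => if ω = (fun _ => false) then x else y

/-- The nilpotent regionally proximal relation of order `d`. -/
def NRP (G X : Type*) [Group G] [MulAction G X] [TopologicalSpace X] (d : ℕ) :
    Set (X × X) :=
  {p | lowerCorner (d + 1) p.1 p.2 ∈ cubeSpace G X (d + 1)}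

/-- `Y_x^[d](X)`: the closure of the `F^[d]`-orbit of the constant configuration `x^[d]`. -/
def Yx (G : Type*) {X : Type*} [Group G] [MulAction G X] [TopologicalSpace X]
    (d : ℕ) (x : X) : Set ((Fin d → Bool) → X) :=
  closure {c | ∃ f ∈ FG G d, c = cubeAct f (fun _ => x)}

/-- `C_x^[d](X)`: cubes whose value at `0⃗` is `x`. -/
def Cx (G : Type*) {X : Type*} [Group G] [MulAction G X] [TopologicalSpace X]
    (d : ℕ) (x : X) : Set ((Fin d → Bool) → X) :=
  {c ∈ cubeSpace G X d | c (fun _ => false) = x}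


/-! Let `E ⊆ X^X` be the Ellis enveloping semigroup of `(G,X)` and `S ⊆ (X^X)^{2^d}` the closure
of `HK^[d]`, acting on `X^[d]` coordinatewise. As `HK^[d]` contains the diagonal (`d ≥ 1`) and `X`
is minimal, `C^[d](X) = S • x^[d]` for every `x`, so it suffices that `x^[d]` is a minimal point
of `S`. Take an idempotent `u` with `u x = x` in a minimal left ideal of `E`. Its diagonal `ū`
lies in a minimal left ideal `L'` of `S`: take an idempotent `v ∈ L' ⊆ S * ū`; its coordinates
are idempotents with `v ω * u = v ω`, which forces `u * v ω = u` because `u` lies in a minimal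
left ideal, so `ū = ū * v ∈ L'`. Then for `p ∈ S` some `w ∈ L'` has `w * p * ū = ū`, whence
`w • p • x^[d] = x^[d]`. -/

open Set Pointwise

namespace Function.End

variable {X : Type*} [TopologicalSpace X]

-- Pointwise convergence: `f * g = f ∘ g` is continuous in `f`, but not in `g` unless `f` is.
instance : TopologicalSpace (Function.End X) := Pi.topologicalSpace

instance [CompactSpace X] : CompactSpace (Function.End X) := Function.compactSpace

instance [T2Space X] : T2Space (Function.End X) := Pi.t2Space

theorem continuous_apply (x : X) : Continuous fun f : Function.End X => f x :=
  _root_.continuous_apply x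

theorem continuous_mul_const (a : Function.End X) : Continuous (· * a) :=
  continuous_pi fun x => continuous_apply (a x)

theorem continuous_const_mul {a : Function.End X} (ha : Continuous a) : Continuous (a * ·) :=
  continuous_pi fun x => ha.comp (continuous_apply x)

end Function.End

section LeftIdeal

variable {M : Type*} [Semigroup M] [TopologicalSpace M]

theorem mul_mem_closure_of_mul_mem (hr : ∀ a : M, Continuous (· * a)) {s : Set M}
    (hl : ∀ a ∈ s, Continuous (a * ·)) (hs : ∀ a ∈ s, ∀ b ∈ s, a * b ∈ s)
    {p q : M} (hp : p ∈ closure s) (hq : q ∈ closure s) : p * q ∈ closure s := by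
  have hsq : ∀ a ∈ s, a * q ∈ closure s := fun a ha =>
    MapsTo.closure_left (fun b hb => subset_closure (hs a ha b hb)) (hl a ha) isClosed_closure hq
  exact MapsTo.closure_left hsq (hr q) isClosed_closure hp

structure IsClosedLeftIdeal (E I : Set M) : Prop where
  nonempty : I.Nonempty
  isClosed : IsClosed I
  subset : I ⊆ E
  mul_mem : ∀ p ∈ E, ∀ q ∈ I, p * q ∈ I

variable [CompactSpace M] {E I L : Set M}

theorem IsClosedLeftIdeal.exists_minimal (hI : IsClosedLeftIdeal E I) :
    ∃ L ⊆ I, Minimal (IsClosedLeftIdeal E) L := by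
  refine zorn_superset_nonempty {J | IsClosedLeftIdeal E J} ?_ I hI
  intro c hc hchain hcne
  have hcI : ∀ J ∈ c, IsClosedLeftIdeal E J := hc
  refine ⟨⋂₀ c, ⟨?_, ?_, ?_, ?_⟩, fun J hJ => sInter_subset_of_mem hJ⟩
  · have : Nonempty c := hcne.coe_sort
    exact IsCompact.nonempty_sInter_of_directed_nonempty_isCompact_isClosed
      (IsChain.directedOn hchain.symm) (fun J hJ => (hcI J hJ).nonempty)
      (fun J hJ => (hcI J hJ).isClosed.isCompact) (fun J hJ => (hcI J hJ).isClosed)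
  · exact isClosed_sInter fun J hJ => (hcI J hJ).isClosed
  · obtain ⟨J, hJ⟩ := hcne
    exact (sInter_subset_of_mem hJ).trans (hcI J hJ).subset
  · exact fun p hp q hq => mem_sInter.2 fun J hJ => (hcI J hJ).mul_mem p hp q (hq J hJ)

variable [T2Space M] (hr : ∀ a : M, Continuous (· * a))
  (hE : ∀ a ∈ E, ∀ b ∈ E, a * b ∈ E)
include hr hE

theorem IsClosedLeftIdeal.image_mul_const (hI : IsClosedLeftIdeal E I) {a : M} (ha : a ∈ E) :
    IsClosedLeftIdeal E ((· * a) '' I) where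
  nonempty := hI.nonempty.image _
  isClosed := (hI.isClosed.isCompact.image (hr a)).isClosed
  subset := by
    rintro _ ⟨q, hq, rfl⟩
    exact hE q (hI.subset hq) a ha
  mul_mem := by
    rintro p hp _ ⟨q, hq, rfl⟩
    exact ⟨p * q, hI.mul_mem p hp q hq, mul_assoc p q a⟩

theorem Minimal.exists_mul_eq (hL : Minimal (IsClosedLeftIdeal E) L) {a b : M}
    (ha : a ∈ L) (hb : b ∈ L) : ∃ w ∈ L, w * a = b := by
  have hsub : (· * a) '' L ⊆ L := by
    rintro _ ⟨q, hq, rfl⟩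
    exact hL.prop.mul_mem q (hL.prop.subset hq) a ha
  rw [← hL.eq_of_le (hL.prop.image_mul_const hr hE (hL.prop.subset ha)) hsub] at hb
  obtain ⟨w, hw, hwa⟩ := hb
  exact ⟨w, hw, hwa⟩

theorem Minimal.mul_eq_of_isIdempotentElem (hL : Minimal (IsClosedLeftIdeal E) L) {u v : M}
    (hu : u ∈ L) (huu : IsIdempotentElem u) (hv : v ∈ E) (hvv : IsIdempotentElem v)
    (hvu : v * u = v) : u * v = u := by
  have huvL : u * v ∈ L := by
    simpa only [mul_assoc, hvu] using
      hL.prop.mul_mem _ (hE u (hL.prop.subset hu) v hv) u hu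
  have huv : IsIdempotentElem (u * v) := by
    rw [IsIdempotentElem, mul_assoc, ← mul_assoc v, hvu, hvv.eq]
  obtain ⟨w, -, hw⟩ := hL.exists_mul_eq hr hE huvL hu
  calc u * v = u * u * v := by rw [huu.eq]
    _ = w * (u * v) * (u * v) := by rw [hw, mul_assoc]
    _ = u := by rw [mul_assoc, huv.eq, hw]

end LeftIdeal

theorem continuous_mul_const_pi {M ι : Type*} [Mul M] [TopologicalSpace M]
    (hr : ∀ a : M, Continuous (· * a)) (a : ι → M) : Continuous (· * a) :=
  continuous_pi fun i => (hr (a i)).comp (continuous_apply i)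

theorem Minimal.exists_minimal_const_mem {M ι : Type*} [Semigroup M] [TopologicalSpace M]
    [CompactSpace M] [T2Space M] (hr : ∀ a : M, Continuous (· * a)) {E L : Set M}
    (hE : ∀ a ∈ E, ∀ b ∈ E, a * b ∈ E) {S : Set (ι → M)} (hSc : IsClosed S)
    (hS : ∀ a ∈ S, ∀ b ∈ S, a * b ∈ S) (hSE : ∀ p ∈ S, ∀ i, p i ∈ E)
    (hES : ∀ q ∈ E, (fun _ => q) ∈ S) (hL : Minimal (IsClosedLeftIdeal E) L) {u : M}
    (hu : u ∈ L) (huu : IsIdempotentElem u) :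
    ∃ L', Minimal (IsClosedLeftIdeal S) L' ∧ (fun _ => u) ∈ L' := by
  have hrS := continuous_mul_const_pi (ι := ι) hr
  have huS : (fun _ => u) ∈ S := hES u (hL.prop.subset hu)
  have hSS : IsClosedLeftIdeal S S := ⟨⟨_, huS⟩, hSc, subset_rfl, hS⟩
  obtain ⟨L', hL'u, hL'⟩ := (hSS.image_mul_const hrS hS huS).exists_minimal
  obtain ⟨v, hvL', hvv⟩ := exists_idempotent_in_compact_subsemigroup hrS L' hL'.prop.nonempty
    hL'.prop.isClosed.isCompact fun a ha b hb => hL'.prop.mul_mem a (hL'.prop.subset ha) b hb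
  have hvu : v * (fun _ => u) = v := by
    obtain ⟨q, -, rfl⟩ := hL'u hvL'
    rw [mul_assoc, show (fun _ : ι => u) * (fun _ => u) = fun _ => u from funext fun _ => huu]
  have huv : (fun _ => u) * v = fun _ => u := funext fun i =>
    hL.mul_eq_of_isIdempotentElem hr hE hu huu (hSE v (hL'.prop.subset hvL') i)
      (congrFun hvv i) (congrFun hvu i)
  exact ⟨L', hL', huv ▸ hL'.prop.mul_mem _ huS v hvL'⟩

/-- A point fixed by an element of a minimal left ideal is a minimal point. -/
theorem Minimal.exists_smul_smul_eq {M Y : Type*} [Monoid M] [MulAction M Y]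
    [TopologicalSpace M] [CompactSpace M] [T2Space M] (hr : ∀ a : M, Continuous (· * a))
    {S L : Set M} (hS : ∀ a ∈ S, ∀ b ∈ S, a * b ∈ S)
    (hL : Minimal (IsClosedLeftIdeal S) L)
    {v : M} (hv : v ∈ L) {y : Y} (hvy : v • y = y) {p : M} (hp : p ∈ S) :
    ∃ w ∈ S, w • p • y = y := by
  obtain ⟨w, hw, hwpv⟩ := hL.exists_mul_eq hr hS (hL.prop.mul_mem p hp v hv) hv
  refine ⟨w, hL.prop.subset hw, ?_⟩
  rw [← hvy, smul_smul, smul_smul, mul_assoc, hwpv]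

section Envelope

variable (G X : Type*) [Group G] [MulAction G X] [TopologicalSpace X]

def envelopingSemigroup : Set (Function.End X) :=
  closure (range (MulAction.toEndHom : G →* Function.End X))

variable {G}

/-- The enveloping semigroup of `H` acting coordinatewise on `ι → X`, kept inside
`ι → Function.End X` so that its coordinates lie in `envelopingSemigroup G X`. -/
def cubeEnvelope {ι : Type*} (H : Subgroup (ι → G)) : Set (ι → Function.End X) :=
  closure (MonoidHom.compLeft MulAction.toEndHom ι '' (H : Set (ι → G)))

variable {X} {ι : Type*} {H : Subgroup (ι → G)}

theorem toEndHom_mem_envelopingSemigroup (g : G) :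
    MulAction.toEndHom g ∈ envelopingSemigroup G X :=
  subset_closure ⟨g, rfl⟩

theorem apply_mem_envelopingSemigroup {p : ι → Function.End X} (hp : p ∈ cubeEnvelope X H)
    (i : ι) : p i ∈ envelopingSemigroup G X :=
  MapsTo.closure (by rintro _ ⟨g, -, rfl⟩; exact ⟨g i, rfl⟩) (continuous_apply i) hp

theorem const_mem_cubeEnvelope (hH : ∀ g : G, (fun _ => g) ∈ H) {q : Function.End X}
    (hq : q ∈ envelopingSemigroup G X) : (fun _ => q) ∈ cubeEnvelope X H :=
  MapsTo.closure (by rintro _ ⟨g, rfl⟩; exact ⟨fun _ => g, hH g, rfl⟩)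
    (continuous_pi fun _ => continuous_id) hq

theorem continuous_smul_cube (c : ι → X) : Continuous fun p : ι → Function.End X => p • c :=
  continuous_pi fun i => (Function.End.continuous_apply (c i)).comp (continuous_apply i)

theorem IsClosedLeftIdeal.exists_apply_eq [MulAction.IsMinimal G X] [CompactSpace X]
    [T2Space X] {I : Set (Function.End X)}
    (hI : IsClosedLeftIdeal (envelopingSemigroup G X) I) (y z : X) : ∃ q ∈ I, q y = z := by
  have hclosed : IsClosed ((fun q : Function.End X => q y) '' I) :=
    (hI.isClosed.isCompact.image (Function.End.continuous_apply y)).isClosed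
  have hinv : ∀ g : G, g • (fun q : Function.End X => q y) '' I ⊆ (fun q => q y) '' I := by
    rintro g _ ⟨_, ⟨q, hq, rfl⟩, rfl⟩
    exact ⟨_, hI.mul_mem _ (toEndHom_mem_envelopingSemigroup g) q hq, rfl⟩
  rcases eq_empty_or_univ_of_smul_invariant_closed G hclosed hinv with h | h
  · exact absurd h (hI.nonempty.image _).ne_empty
  · have hz : z ∈ (fun q : Function.End X => q y) '' I := h ▸ mem_univ z
    obtain ⟨q, hq, hqz⟩ := hz
    exact ⟨q, hq, hqz⟩

variable [ContinuousConstSMul G X]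

theorem continuous_toEndHom_mul (g : G) :
    Continuous ((MulAction.toEndHom g : Function.End X) * ·) :=
  Function.End.continuous_const_mul (continuous_const_smul g)

theorem mul_mem_envelopingSemigroup {p q : Function.End X} (hp : p ∈ envelopingSemigroup G X)
    (hq : q ∈ envelopingSemigroup G X) : p * q ∈ envelopingSemigroup G X := by
  refine mul_mem_closure_of_mul_mem Function.End.continuous_mul_const ?_ ?_ hp hq
  · rintro _ ⟨g, rfl⟩
    exact continuous_toEndHom_mul g
  · rintro _ ⟨g, rfl⟩ _ ⟨h, rfl⟩
    exact ⟨g * h, map_mul _ g h⟩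

theorem isClosedLeftIdeal_envelopingSemigroup :
    IsClosedLeftIdeal (envelopingSemigroup G X) (envelopingSemigroup G X) :=
  ⟨⟨_, toEndHom_mem_envelopingSemigroup 1⟩, isClosed_closure, subset_rfl,
    fun _ hp _ hq => mul_mem_envelopingSemigroup hp hq⟩

theorem mul_mem_cubeEnvelope {p q : ι → Function.End X} (hp : p ∈ cubeEnvelope X H)
    (hq : q ∈ cubeEnvelope X H) : p * q ∈ cubeEnvelope X H := by
  refine mul_mem_closure_of_mul_mem (continuous_mul_const_pi Function.End.continuous_mul_const)
    ?_ ?_ hp hq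
  · rintro _ ⟨g, -, rfl⟩
    exact continuous_pi fun i => (continuous_toEndHom_mul (g i)).comp (continuous_apply i)
  · rintro _ ⟨g, hg, rfl⟩ _ ⟨h, hh, rfl⟩
    exact ⟨g * h, mul_mem hg hh, map_mul _ g h⟩

variable [MulAction.IsMinimal G X] [CompactSpace X] [T2Space X]

theorem exists_minimal_isIdempotentElem_apply_eq (x : X) :
    ∃ L, Minimal (IsClosedLeftIdeal (envelopingSemigroup G X)) L ∧
      ∃ u ∈ L, IsIdempotentElem u ∧ u x = x := by
  obtain ⟨L, -, hL⟩ := (isClosedLeftIdeal_envelopingSemigroup (G := G) (X := X)).exists_minimal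
  have hfix : IsClosed {p ∈ L | p x = x} :=
    hL.prop.isClosed.inter (isClosed_eq (Function.End.continuous_apply x) continuous_const)
  obtain ⟨u, ⟨huL, hux⟩, huu⟩ := exists_idempotent_in_compact_subsemigroup
    Function.End.continuous_mul_const _ (hL.prop.exists_apply_eq x x) hfix.isCompact
    fun a ⟨haL, hax⟩ b ⟨hbL, hbx⟩ =>
      ⟨hL.prop.mul_mem a (hL.prop.subset haL) b hbL, by
        change a (b x) = x
        rw [hbx, hax]⟩
  exact ⟨L, hL, u, huL, huu, hux⟩

theorem exists_smul_smul_const_eq (hH : ∀ g : G, (fun _ => g) ∈ H) (x : X)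
    {p : ι → Function.End X} (hp : p ∈ cubeEnvelope X H) :
    ∃ w ∈ cubeEnvelope X H, w • p • (fun _ : ι => x) = fun _ => x := by
  obtain ⟨L, hL, u, hu, huu, hux⟩ := exists_minimal_isIdempotentElem_apply_eq (G := G) x
  obtain ⟨L', hL', huL'⟩ := hL.exists_minimal_const_mem Function.End.continuous_mul_const
    (fun _ hp _ hq => mul_mem_envelopingSemigroup hp hq) isClosed_closure
    (fun _ hp _ hq => mul_mem_cubeEnvelope hp hq) (fun _ hp => apply_mem_envelopingSemigroup hp)
    (fun _ hq => const_mem_cubeEnvelope hH hq) hu huu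
  exact hL'.exists_smul_smul_eq (continuous_mul_const_pi Function.End.continuous_mul_const)
    (fun _ hp _ hq => mul_mem_cubeEnvelope hp hq) huL' (funext fun _ => hux) hp

end Envelope

section HostKra

variable {G X : Type*} [Group G] [MulAction G X] [TopologicalSpace X] {d : ℕ}

theorem const_mem_HK (i : Fin d) (g : G) : (fun _ => g) ∈ HK G d := by
  have hsplit : (fun ω : Fin d → Bool => if ω i = false then g else 1) *
      (fun ω => if ω i = true then g else 1) = fun _ => g := by
    funext ω
    cases h : ω i <;> simp [h]
  exact hsplit ▸ mul_mem (Subgroup.subset_closure ⟨g, i, false, rfl⟩)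
    (Subgroup.subset_closure ⟨g, i, true, rfl⟩)

theorem smul_mem_closure_orbit {H : Subgroup ((Fin d → Bool) → G)}
    {p : (Fin d → Bool) → Function.End X} (hp : p ∈ cubeEnvelope X H)
    (c : (Fin d → Bool) → X) : p • c ∈ closure {c' | ∃ g ∈ H, c' = cubeAct g c} :=
  MapsTo.closure (by rintro _ ⟨g, hg, rfl⟩; exact ⟨g, hg, rfl⟩) (continuous_smul_cube c) hp

variable [ContinuousConstSMul G X]

theorem cubeAct_mem_cubeSpace {g : (Fin d → Bool) → G} (hg : g ∈ HK G d)
    {c : (Fin d → Bool) → X} (hc : c ∈ cubeSpace G X d) :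
    cubeAct g c ∈ cubeSpace G X d := by
  refine MapsTo.closure ?_ (continuous_pi fun ω => (continuous_apply ω).const_smul (g ω)) hc
  rintro _ ⟨g', hg', y, rfl⟩
  exact ⟨g * g', mul_mem hg hg', y, funext fun ω => (mul_smul (g ω) (g' ω) y).symm⟩

theorem cubeSpace_subset_image_smul_const [MulAction.IsMinimal G X] [CompactSpace X] [T2Space X]
    (i : Fin d) (x : X) :
    cubeSpace G X d ⊆ (· • fun _ => x) '' cubeEnvelope X (HK G d) := by
  refine closure_minimal ?_ (isClosed_closure.isCompact.image (continuous_smul_cube _)).isClosed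
  rintro _ ⟨g, hg, y, rfl⟩
  obtain ⟨q, hq, hqx⟩ := isClosedLeftIdeal_envelopingSemigroup.exists_apply_eq (G := G) x y
  refine ⟨MonoidHom.compLeft MulAction.toEndHom _ g * fun _ => q,
    mul_mem_cubeEnvelope (subset_closure ⟨g, hg, rfl⟩)
      (const_mem_cubeEnvelope (const_mem_HK i) hq),
    funext fun ω => congrArg (g ω • ·) hqx⟩

end HostKra

theorem cubeSpace_HK_minimal_general
    {G X : Type*} [Group G] [TopologicalSpace G]
    [TopologicalSpace X] [CompactSpace X] [T2Space X]
    [MulAction G X] [ContinuousSMul G X]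
    {d : ℕ} (hd : 1 ≤ d)
    (hmin : ∀ x : X, Dense (MulAction.orbit G x)) :
    (∀ g ∈ HK G d, ∀ c ∈ cubeSpace G X d, cubeAct g c ∈ cubeSpace G X d) ∧
    (∀ c ∈ cubeSpace G X d,
      cubeSpace G X d ⊆ closure {c' | ∃ g ∈ HK G d, c' = cubeAct g c}) := by
  have : MulAction.IsMinimal G X := ⟨hmin⟩
  let i : Fin d := ⟨0, hd⟩
  refine ⟨fun g hg c hc => cubeAct_mem_cubeSpace hg hc, fun c hc c' hc' => ?_⟩
  obtain ⟨x⟩ : Nonempty X := ⟨c default⟩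
  obtain ⟨p, hp, rfl⟩ := cubeSpace_subset_image_smul_const i x hc
  obtain ⟨r, hr, rfl⟩ := cubeSpace_subset_image_smul_const i x hc'
  obtain ⟨w, hw, hwp⟩ := exists_smul_smul_const_eq (const_mem_HK i) x hp
  have hrw := smul_mem_closure_orbit (mul_mem_cubeEnvelope hr hw) (p • fun _ => x)
  rwa [mul_smul, hwp] at hrw

/-- For a minimal t.d.s. `(G,X)`, the action of the Host–Kra cube group `HK^[d]` on
`C_G^[d](X)` is minimal: the cubespace is invariant and every orbit is dense in it. -/
theorem cubeSpace_HK_minimal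
    {G X : Type*} [Group G] [TopologicalSpace G] [IsTopologicalGroup G]
    [TopologicalSpace X] [CompactSpace X] [T2Space X]
    [MulAction G X] [ContinuousSMul G X]
    {d : ℕ} (hd : 1 ≤ d)
    (hmin : ∀ x : X, Dense (MulAction.orbit G x)) :
    (∀ g ∈ HK G d, ∀ c ∈ cubeSpace G X d, cubeAct g c ∈ cubeSpace G X d) ∧
    (∀ c ∈ cubeSpace G X d,
      cubeSpace G X d ⊆ closure {c' | ∃ g ∈ HK G d, c' = cubeAct g c}) :=
  cubeSpace_HK_minimal_general hd hmin
end

section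
/- Let (G,X) be a minimal topological dynamical system, let d ≥ 1 and let x ∈ X. Then the action of the face cube group F^[d] on Y_x^[d](X) is minimal: every F^[d]-orbit in Y_x^[d](X) is dense in Y_x^[d](X). -/
/-!
Let `E ⊆ X^X` be the Ellis semigroup of `(G, X)` and `S ⊆ (X^X)^{0,1}^d` the enveloping
semigroup of the `F^[d]`-action; both are compact semigroups with continuous right
multiplications, and `Y_x^[d] = S • x^[d]`. Minimality of `X` gives an idempotent `u` with
`u x = x` in a minimal left ideal `L` of `E`. Products of the face elements `[u]_F` give
`v ∈ S` equal to `id` at `0⃗` and to `u` elsewhere, so `v` fixes `x^[d]`. Idempotents of `L` are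
right identities on `L`, hence `v * w = v` for an idempotent `w` of a minimal left ideal
`I ⊆ S * v`, so `v ∈ I`. For `c = p • x^[d]` and `y = r • x^[d]`, minimality of `I` yields
`q ∈ S` with `q * p * v = v`, whence `(r * q) • c = y`.
-/

open Set

section RightTopological

variable {M : Type*} [Semigroup M] [TopologicalSpace M]

theorem mul_mem_closure_of_continuous {B : Set M} (hB : ∀ a ∈ B, ∀ b ∈ B, a * b ∈ B)
    (hleft : ∀ a ∈ B, Continuous (a * ·)) (hright : ∀ a : M, Continuous (· * a))
    {p q : M} (hp : p ∈ closure B) (hq : q ∈ closure B) : p * q ∈ closure B := by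
  have hBq : MapsTo (· * q) B (closure B) := fun a ha =>
    map_mem_closure (hleft a ha) hq fun b hb => hB a ha b hb
  simpa only [closure_closure] using map_mem_closure (hright q) hp hBq

def Subsemigroup.rightTopologicalClosure (T : Subsemigroup M)
    (hleft : ∀ a ∈ T, Continuous (a * ·)) (hright : ∀ a : M, Continuous (· * a)) :
    Subsemigroup M where
  carrier := _root_.closure T
  mul_mem' := mul_mem_closure_of_continuous (fun _ ha _ hb => T.mul_mem ha hb) hleft hright

structure IsClosedLeftIdeal_s3 (S : Subsemigroup M) (I : Set M) : Prop where
  subset : I ⊆ S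
  nonempty : I.Nonempty
  isClosed : IsClosed I
  mul_mem : ∀ a ∈ S, ∀ b ∈ I, a * b ∈ I

variable {S : Subsemigroup M}

theorem isClosedLeftIdeal_self (hS : IsClosed (S : Set M)) (hne : (S : Set M).Nonempty) :
    IsClosedLeftIdeal_s3 S S :=
  ⟨subset_rfl, hne, hS, fun _ ha _ hb => S.mul_mem ha hb⟩

theorem IsClosedLeftIdeal_s3.exists_minimal_subset [CompactSpace M] {J : Set M}
    (hJ : IsClosedLeftIdeal_s3 S J) : ∃ I ⊆ J, Minimal (IsClosedLeftIdeal_s3 S) I := by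
  refine zorn_superset_nonempty {I | IsClosedLeftIdeal_s3 S I}
    (fun c hc hchain ⟨I₀, hI₀⟩ => ?_) J hJ
  have : Nonempty c := ⟨⟨I₀, hI₀⟩⟩
  refine ⟨⋂₀ c, ⟨(sInter_subset_of_mem hI₀).trans (hc hI₀).subset, ?_,
    isClosed_sInter fun I hI => (hc hI).isClosed,
    fun a ha b hb => mem_sInter.2 fun I hI => (hc hI).mul_mem a ha b (hb I hI)⟩,
    fun _ => sInter_subset_of_mem⟩
  exact IsCompact.nonempty_sInter_of_directed_nonempty_isCompact_isClosed
    (fun I hI I' hI' => (hchain.total hI hI').elim (fun h => ⟨I, hI, subset_rfl, h⟩)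
      (fun h => ⟨I', hI', h, subset_rfl⟩)) (fun I hI => (hc hI).nonempty)
    (fun I hI => (hc hI).isClosed.isCompact) (fun I hI => (hc hI).isClosed)

variable [CompactSpace M] [T2Space M] {I : Set M}

theorem isClosedLeftIdeal_image_mul_right (hS : IsClosed (S : Set M))
    (hright : ∀ a : M, Continuous (· * a)) {a : M} (ha : a ∈ S) :
    IsClosedLeftIdeal_s3 S ((· * a) '' S) where
  subset := by rintro _ ⟨b, hb, rfl⟩; exact S.mul_mem hb ha
  nonempty := ⟨_, a, ha, rfl⟩
  isClosed := (hS.isCompact.image (hright a)).isClosed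
  mul_mem := by
    rintro c hc _ ⟨b, hb, rfl⟩
    exact ⟨c * b, S.mul_mem hc hb, mul_assoc c b a⟩

theorem Minimal.image_mul_right_eq (hI : Minimal (IsClosedLeftIdeal_s3 S) I)
    (hS : IsClosed (S : Set M)) (hright : ∀ a : M, Continuous (· * a)) {a : M} (ha : a ∈ I) :
    (· * a) '' S = I :=
  hI.eq_of_subset (isClosedLeftIdeal_image_mul_right hS hright (hI.prop.subset ha))
    (image_subset_iff.2 fun b hb => hI.prop.mul_mem b hb a ha)

theorem Minimal.exists_mul_eq_s3 (hI : Minimal (IsClosedLeftIdeal_s3 S) I)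
    (hS : IsClosed (S : Set M)) (hright : ∀ a : M, Continuous (· * a)) {a b : M}
    (ha : a ∈ I) (hb : b ∈ I) : ∃ s ∈ S, s * a = b := by
  rwa [← hI.image_mul_right_eq hS hright ha] at hb

theorem Minimal.mul_eq_self_of_isIdempotentElem (hI : Minimal (IsClosedLeftIdeal_s3 S) I)
    (hS : IsClosed (S : Set M)) (hright : ∀ a : M, Continuous (· * a)) {a e : M}
    (ha : a ∈ I) (he : e ∈ I) (he' : IsIdempotentElem e) : a * e = a := by
  obtain ⟨s, -, rfl⟩ := hI.exists_mul_eq_s3 hS hright he ha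
  rw [mul_assoc, he'.eq]

theorem Minimal.exists_smul_eq_of_smul_eq_self {Y : Type*} [SemigroupAction M Y]
    (hI : Minimal (IsClosedLeftIdeal_s3 S) I) (hS : IsClosed (S : Set M))
    (hright : ∀ a : M, Continuous (· * a)) {v : M} (hv : v ∈ I) {z : Y} (hvz : v • z = z)
    {p r : M} (hp : p ∈ S) (hr : r ∈ S) : ∃ s ∈ S, s • p • z = r • z := by
  obtain ⟨q, hq, hqpv⟩ := hI.exists_mul_eq_s3 hS hright (hI.prop.mul_mem p hp v hv) hv
  refine ⟨r * q, S.mul_mem hr hq, ?_⟩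
  calc (r * q) • p • z = r • (q * (p * v)) • z := by simp only [mul_smul, hvz]
    _ = r • z := by rw [hqpv, hvz]

end RightTopological

theorem continuous_pi_mul_right {ι : Type*} {M : ι → Type*} [∀ i, Mul (M i)]
    [∀ i, TopologicalSpace (M i)] (h : ∀ i (a : M i), Continuous (· * a)) (q : ∀ i, M i) :
    Continuous (· * q) :=
  continuous_pi fun i => (h i (q i)).comp (continuous_apply i)

namespace Function.End

variable {X : Type*} [TopologicalSpace X]

instance inst_s3 : TopologicalSpace (Function.End X) := Pi.topologicalSpace

instance inst_s3_2 [T2Space X] : T2Space (Function.End X) := inferInstanceAs (T2Space (X → X))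

instance inst_s3_3 [CompactSpace X] : CompactSpace (Function.End X) :=
  inferInstanceAs (CompactSpace (X → X))

theorem continuous_mul_right (q : Function.End X) : Continuous (· * q) :=
  continuous_pi fun y => continuous_apply (q y)

theorem continuous_mul_left {p : Function.End X} (hp : Continuous p) : Continuous (p * ·) :=
  continuous_pi fun y => hp.comp (continuous_apply y)

end Function.End

theorem FG_apply_zero {G : Type*} [Group G] {d : ℕ} {f : (Fin d → Bool) → G}
    (hf : f ∈ FG G d) :
    f (fun _ => false) = 1 := by
  induction hf using Subgroup.closure_induction with
  | mem _ hg => obtain ⟨h, i, rfl⟩ := hg; simp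
  | one => rfl
  | mul _ _ _ _ ha hb => rw [Pi.mul_apply, ha, hb, one_mul]
  | inv _ _ ha => rw [Pi.inv_apply, ha, inv_one]

section FaceEllis

variable (G X : Type*) [Group G] [MulAction G X] [TopologicalSpace X] [ContinuousConstSMul G X]

def ellis : Subsemigroup (Function.End X) :=
  (MonoidHom.mrange (MulAction.toEndHom : G →* Function.End X)).toSubsemigroup
    |>.rightTopologicalClosure
    (by rintro _ ⟨g, rfl⟩; exact Function.End.continuous_mul_left (continuous_const_smul g))
    Function.End.continuous_mul_right

/-- The enveloping semigroup of the action of `F^[d]` on `X^[d]`. -/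
def faceEllis (d : ℕ) : Subsemigroup ((Fin d → Bool) → Function.End X) :=
  ((FG G d).toSubmonoid.map ((MulAction.toEndHom : G →* Function.End X).compLeft _)
    ).toSubsemigroup.rightTopologicalClosure
    (by
      rintro _ ⟨f, -, rfl⟩
      exact continuous_pi fun ω => (Function.End.continuous_mul_left
        (continuous_const_smul (f ω))).comp (continuous_apply ω))
    (continuous_pi_mul_right fun _ => Function.End.continuous_mul_right)

variable {G X} {d : ℕ}

theorem mem_ellis {u : Function.End X} :
    u ∈ ellis G X ↔ u ∈ closure (range (MulAction.toEndHom : G →* Function.End X)) :=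
  Iff.rfl

theorem mem_faceEllis {p : (Fin d → Bool) → Function.End X} :
    p ∈ faceEllis G X d ↔
      p ∈ closure ((MulAction.toEndHom : G →* Function.End X).compLeft _ '' FG G d) :=
  Iff.rfl

theorem isClosed_ellis : IsClosed (ellis G X : Set (Function.End X)) :=
  isClosed_closure

theorem isClosed_faceEllis :
    IsClosed (faceEllis G X d : Set ((Fin d → Bool) → Function.End X)) :=
  isClosed_closure

theorem faceEllis_apply_mem_ellis {p : (Fin d → Bool) → Function.End X}
    (hp : p ∈ faceEllis G X d) (ω : Fin d → Bool) : p ω ∈ ellis G X :=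
  mem_ellis.2 <| map_mem_closure (f := fun q => q ω) (continuous_apply ω) (mem_faceEllis.1 hp)
    (by rintro _ ⟨f, -, rfl⟩; exact ⟨f ω, rfl⟩)

theorem faceEllis_apply_zero [T2Space X] {p : (Fin d → Bool) → Function.End X}
    (hp : p ∈ faceEllis G X d) : p (fun _ => false) = 1 := by
  refine closure_minimal ?_ (isClosed_eq (continuous_apply _) continuous_const) hp
  rintro _ ⟨f, hf, rfl⟩
  simp [FG_apply_zero hf]

theorem smul_mem_closure_FG_orbit {p : (Fin d → Bool) → Function.End X}
    (hp : p ∈ faceEllis G X d) (c : (Fin d → Bool) → X) :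
    p • c ∈ closure {c' | ∃ f ∈ FG G d, c' = cubeAct f c} := by
  refine map_mem_closure (f := (· • c)) ?_ (mem_faceEllis.1 hp) ?_
  · exact continuous_pi fun ω => (continuous_apply (c ω)).comp (continuous_apply ω)
  · rintro _ ⟨f, hf, rfl⟩
    exact ⟨f, hf, rfl⟩

theorem one_mem_faceEllis : (1 : (Fin d → Bool) → Function.End X) ∈ faceEllis G X d := by
  rw [mem_faceEllis, ← map_one ((MulAction.toEndHom : G →* Function.End X).compLeft _)]
  exact subset_closure (mem_image_of_mem _ (one_mem _))

theorem upperFace_mem_faceEllis {u : Function.End X} (hu : u ∈ ellis G X) (i : Fin d) :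
    (fun ω : Fin d → Bool => if ω i = true then u else 1) ∈ faceEllis G X d := by
  refine mem_faceEllis.2 <| map_mem_closure
    (f := fun e (ω : Fin d → Bool) => if ω i = true then e else 1) ?_ (mem_ellis.1 hu) ?_
  · exact continuous_pi fun ω => by split_ifs <;> fun_prop
  · rintro _ ⟨g, rfl⟩
    refine ⟨fun ω => if ω i = true then g else 1, Subgroup.subset_closure ⟨g, i, rfl⟩, ?_⟩
    funext ω
    by_cases h : ω i = true <;> simp [h]

theorem upperFaceUnion_mem_faceEllis {u : Function.End X} (hu : u ∈ ellis G X)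
    (hidem : IsIdempotentElem u) (s : Finset (Fin d)) :
    (fun ω : Fin d → Bool => if ∃ i ∈ s, ω i = true then u else 1) ∈ faceEllis G X d := by
  induction s using Finset.induction_on with
  | empty => simpa [Pi.one_def] using one_mem_faceEllis
  | insert a s _ ih =>
    convert (faceEllis G X d).mul_mem (upperFace_mem_faceEllis hu a) ih using 1
    funext ω
    by_cases h : ω a = true <;> simp [h, hidem.eq]

variable [CompactSpace X] [T2Space X]

theorem exists_minimal_idempotent_apply_eq (hmin : ∀ y : X, Dense (MulAction.orbit G y))
    (x : X) : ∃ L u, Minimal (IsClosedLeftIdeal_s3 (ellis G X)) L ∧ u ∈ L ∧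
      IsIdempotentElem u ∧ u x = x := by
  obtain ⟨L, -, hL⟩ := (isClosedLeftIdeal_self (S := ellis G X) isClosed_ellis
    ⟨1, subset_closure ⟨1, map_one _⟩⟩).exists_minimal_subset
  obtain ⟨p₀, hp₀⟩ := hL.prop.nonempty
  have hLx : x ∈ (fun p : Function.End X => p x) '' L := by
    have horbit : MulAction.orbit G (p₀ x) ⊆ (fun p : Function.End X => p x) '' L := by
      rintro _ ⟨g, rfl⟩
      exact ⟨MulAction.toEndHom g * p₀,
        hL.prop.mul_mem _ (subset_closure ⟨g, rfl⟩) _ hp₀, rfl⟩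
    have hdense := closure_minimal horbit
      (hL.prop.isClosed.isCompact.image (continuous_apply x)).isClosed
    rw [(hmin _).closure_eq] at hdense
    exact hdense (mem_univ x)
  obtain ⟨p₁, hp₁L, hp₁x⟩ := hLx
  obtain ⟨u, ⟨huL, hux⟩, hu⟩ := exists_idempotent_in_compact_subsemigroup
    Function.End.continuous_mul_right {p ∈ L | p x = x} ⟨p₁, hp₁L, hp₁x⟩
    (hL.prop.isClosed.inter (isClosed_eq (continuous_apply x) continuous_const)).isCompact
    fun a ha b hb => ⟨hL.prop.mul_mem a (hL.prop.subset ha.1) b hb.1,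
      (congrArg a hb.2).trans ha.2⟩
  exact ⟨L, u, hL, huL, hu, hux⟩

theorem exists_minimal_smul_const_eq (hmin : ∀ y : X, Dense (MulAction.orbit G y)) (x : X) :
    ∃ I v, Minimal (IsClosedLeftIdeal_s3 (faceEllis G X d)) I ∧ v ∈ I ∧
      v • (fun _ : Fin d → Bool => x) = fun _ => x := by
  obtain ⟨L, u, hL, huL, hu, hux⟩ := exists_minimal_idempotent_apply_eq hmin x
  set v : (Fin d → Bool) → Function.End X := fun ω => if ∃ i, ω i = true then u else 1
  have hv : v ∈ faceEllis G X d := by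
    simpa using upperFaceUnion_mem_faceEllis (hL.prop.subset huL) hu Finset.univ
  have hright : ∀ a : (Fin d → Bool) → Function.End X, Continuous (· * a) :=
    continuous_pi_mul_right fun _ => Function.End.continuous_mul_right
  obtain ⟨I, hIJ, hI⟩ :=
    (isClosedLeftIdeal_image_mul_right isClosed_faceEllis hright hv).exists_minimal_subset
  obtain ⟨w, hwI, hw⟩ := exists_idempotent_in_compact_subsemigroup hright I hI.prop.nonempty
    hI.prop.isClosed.isCompact fun a ha b hb => hI.prop.mul_mem a (hI.prop.subset ha) b hb
  obtain ⟨p, hp, rfl⟩ := hIJ hwI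
  have hvw : v * (p * v) = v := by
    funext ω
    by_cases hω : ∃ i, ω i = true
    · have hvω : v ω = u := if_pos hω
      have hidem : IsIdempotentElem (p ω * u) := by
        simpa only [IsIdempotentElem, Pi.mul_apply, hvω] using congrFun hw ω
      simp only [Pi.mul_apply, hvω]
      exact hL.mul_eq_self_of_isIdempotentElem isClosed_ellis
        Function.End.continuous_mul_right huL
        (hL.prop.mul_mem _ (faceEllis_apply_mem_ellis hp ω) u huL) hidem
    · obtain rfl : ω = fun _ => false := funext fun i => by simpa using not_exists.1 hω i
      simp [v, faceEllis_apply_zero hp]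
  refine ⟨I, v, hI, hvw ▸ hI.prop.mul_mem v hv _ hwI, ?_⟩
  funext ω
  by_cases hω : ∃ i, ω i = true
  · simp [v, hω, Function.End.smul_def, hux]
  · simp [v, hω]

theorem Yx_subset_image_smul (x : X) :
    Yx G d x ⊆
      (· • fun _ => x) '' (faceEllis G X d : Set ((Fin d → Bool) → Function.End X)) :=
  closure_minimal
    (by rintro _ ⟨f, hf, rfl⟩; exact ⟨_, subset_closure ⟨f, hf, rfl⟩, rfl⟩)
    (isClosed_faceEllis.isCompact.image
      (continuous_pi fun ω => (continuous_apply x).comp (continuous_apply ω))).isClosed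

end FaceEllis

theorem Yx_FG_minimal_general
    {G X : Type*} [Group G] [TopologicalSpace G]
    [TopologicalSpace X] [CompactSpace X] [T2Space X]
    [MulAction G X] [ContinuousSMul G X]
    {d : ℕ}
    (hmin : ∀ x : X, Dense (MulAction.orbit G x)) (x : X) :
    ∀ c ∈ Yx G d x, Yx G d x ⊆ closure {c' | ∃ f ∈ FG G d, c' = cubeAct f c} := by
  obtain ⟨I, v, hI, hvI, hvx⟩ := exists_minimal_smul_const_eq (d := d) hmin x
  rintro _ hc y hy
  obtain ⟨p, hp, rfl⟩ := Yx_subset_image_smul x hc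
  obtain ⟨r, hr, rfl⟩ := Yx_subset_image_smul x hy
  obtain ⟨s, hs, hsr⟩ := hI.exists_smul_eq_of_smul_eq_self isClosed_faceEllis
    (continuous_pi_mul_right fun _ => Function.End.continuous_mul_right) hvI hvx hp hr
  convert smul_mem_closure_FG_orbit hs (p • fun _ => x) using 1
  exact hsr.symm

/-- For a minimal t.d.s. `(G,X)`, the action of the face cube group `F^[d]` on
`Y_x^[d](X)` is minimal: every `F^[d]`-orbit in `Y_x^[d](X)` is dense in it. -/
theorem Yx_FG_minimal
    {G X : Type*} [Group G] [TopologicalSpace G] [IsTopologicalGroup G]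
    [TopologicalSpace X] [CompactSpace X] [T2Space X]
    [MulAction G X] [ContinuousSMul G X]
    {d : ℕ} (hd : 1 ≤ d)
    (hmin : ∀ x : X, Dense (MulAction.orbit G x)) (x : X) :
    ∀ c ∈ Yx G d x, Yx G d x ⊆ closure {c' | ∃ f ∈ FG G d, c' = cubeAct f c} :=
  Yx_FG_minimal_general hmin x
end

section
/- Let G be a group and let d ≥ 1. Then HK^[d] = F^[d]·Δ^[d](G): every element of the Host–Kra cube group HK^[d] is a product f·g^[d] with f ∈ F^[d] and g ∈ G, and conversely every such product lies in HK^[d]. -/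
section
variable {G : Type*} [Group G] {d : ℕ}

lemma conj_mem_FG (t : G) {f : (Fin d → Bool) → G} (hf : f ∈ FG G d) :
    (fun _ => t : (Fin d → Bool) → G) * f * (fun _ => t)⁻¹ ∈ FG G d := by
  induction hf using Subgroup.closure_induction with
  | mem x hx =>
    obtain ⟨h, i, rfl⟩ := hx
    apply Subgroup.subset_closure
    refine ⟨t * h * t⁻¹, i, ?_⟩
    funext ω
    simp only [Pi.mul_apply, Pi.inv_apply]
    cases hb : ω i <;> simp [hb]
  | one => simpa using one_mem _
  | mul x y hx hy px py =>
    have : (fun _ => t : (Fin d → Bool) → G) * (x * y) * (fun _ => t)⁻¹ =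
        ((fun _ => t) * x * (fun _ => t)⁻¹) * ((fun _ => t) * y * (fun _ => t)⁻¹) := by
      group
    rw [this]; exact mul_mem px py
  | inv x hx px =>
    have : (fun _ => t : (Fin d → Bool) → G) * x⁻¹ * (fun _ => t)⁻¹ =
        ((fun _ => t) * x * (fun _ => t)⁻¹)⁻¹ := by group
    rw [this]; exact inv_mem px

end

/-- `HK^[d] = F^[d] · Δ^[d](G)`. -/
theorem HK_eq_FG_mul_diagonal
    {G : Type*} [Group G] {d : ℕ} (hd : 1 ≤ d) :
    ∀ g : (Fin d → Bool) → G,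
      g ∈ HK G d ↔ ∃ f ∈ FG G d, ∃ t : G, g = f * (fun _ => t) := by
  have hFGHK : FG G d ≤ HK G d := by
    apply Subgroup.closure_mono
    rintro g ⟨h, i, rfl⟩
    exact ⟨h, i, true, rfl⟩
  have hconst : ∀ t : G, (fun _ => t : (Fin d → Bool) → G) ∈ HK G d := by
    intro t
    have i : Fin d := ⟨0, hd⟩
    have h1 : (fun ω => if ω i = true then t else 1 : (Fin d → Bool) → G) ∈ HK G d :=
      Subgroup.subset_closure ⟨t, i, true, rfl⟩
    have h2 : (fun ω => if ω i = false then t else 1 : (Fin d → Bool) → G) ∈ HK G d :=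
      Subgroup.subset_closure ⟨t, i, false, rfl⟩
    have heq : (fun _ => t : (Fin d → Bool) → G) =
        (fun ω => if ω i = true then t else 1) * (fun ω => if ω i = false then t else 1) := by
      funext ω; cases hb : ω i <;> simp [Pi.mul_apply, hb]
    rw [heq]; exact mul_mem h1 h2
  intro g
  constructor
  · intro hg
    induction hg using Subgroup.closure_induction with
    | mem x hx =>
      obtain ⟨h, i, a, rfl⟩ := hx
      cases a with
      | true => exact ⟨_, Subgroup.subset_closure ⟨h, i, rfl⟩, 1, by funext ω; simp⟩
      | false =>
        refine ⟨fun ω => if ω i = true then h⁻¹ else 1,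
          Subgroup.subset_closure ⟨h⁻¹, i, rfl⟩, h, ?_⟩
        funext ω; cases hb : ω i <;> simp [Pi.mul_apply, hb]
    | one => exact ⟨1, one_mem _, 1, by simp; rfl⟩
    | mul x y hx hy px py =>
      obtain ⟨f1, hf1, t1, rfl⟩ := px
      obtain ⟨f2, hf2, t2, rfl⟩ := py
      refine ⟨f1 * ((fun _ => t1) * f2 * (fun _ => t1)⁻¹),
        mul_mem hf1 (conj_mem_FG t1 hf2), t1 * t2, ?_⟩
      funext ω; simp [Pi.mul_apply, mul_assoc]
    | inv x hx px =>
      obtain ⟨f, hf, t, rfl⟩ := px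
      refine ⟨(fun _ => t⁻¹) * f⁻¹ * (fun _ => t⁻¹)⁻¹,
        conj_mem_FG t⁻¹ (inv_mem hf), t⁻¹, ?_⟩
      funext ω; simp [Pi.mul_apply, Pi.inv_apply]
  · rintro ⟨f, hf, t, rfl⟩
    exact mul_mem (hFGHK hf) (hconst t)
end

section
/- Let (G,X) be a minimal topological dynamical system, let x₀ ∈ X and let d ≥ 1. Then C_G^[d](X) equals the closure of {g·x₀^[d] : g ∈ HK^[d]} and also equals the closure of {f·x^[d] : f ∈ F^[d], x ∈ X}. -/
/-!
`HK^[d] = F^[d] ⊔ Δ`, where the diagonal `Δ = {k^[d]}` normalizes `F^[d]`; hence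
`HK^[d] = F^[d] * Δ`, and since `Δ` moves constant cubes to constant cubes, the `HK^[d]`- and
`F^[d]`-translates of constant cubes coincide. By minimality the orbit of `x₀` is dense, so every
constant cube is a limit of cubes `k^[d] • x₀^[d]` with `k^[d] ∈ HK^[d]`.
-/

namespace CubeGroup

variable {G : Type*} [Group G] {d : ℕ}

def diagonal (G : Type*) [Group G] (d : ℕ) : Subgroup ((Fin d → Bool) → G) :=
  (Pi.constMonoidHom (Fin d → Bool) G).range

lemma const_mem_diagonal (k : G) : (fun _ => k : (Fin d → Bool) → G) ∈ diagonal G d :=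
  ⟨k, rfl⟩

lemma FG_le_HK : FG G d ≤ HK G d := by
  refine Subgroup.closure_le (HK G d) |>.2 ?_
  rintro g ⟨h, i, rfl⟩
  exact Subgroup.subset_closure ⟨h, i, true, rfl⟩

/-- `k^[d] = [k]_{ω i = 1} * [k]_{ω i = 0}`, which needs some coordinate `i`. -/
lemma diagonal_le_HK (hd : 1 ≤ d) : diagonal G d ≤ HK G d := by
  rintro _ ⟨k, rfl⟩
  let i : Fin d := ⟨0, hd⟩
  have hsplit : Pi.constMonoidHom (Fin d → Bool) G k =
      (fun ω => if ω i = true then k else 1) * (fun ω => if ω i = false then k else 1) := by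
    funext ω
    cases hb : ω i <;> simp [hb]
  rw [hsplit]
  exact mul_mem (Subgroup.subset_closure ⟨k, i, true, rfl⟩)
    (Subgroup.subset_closure ⟨k, i, false, rfl⟩)

lemma diagonal_le_normalizer_FG :
    diagonal G d ≤ Subgroup.normalizer (FG G d : Set ((Fin d → Bool) → G)) := by
  rw [Subgroup.le_normalizer_iff]
  rintro _ ⟨k, rfl⟩ f hf
  suffices FG G d ≤ (FG G d).comap (MulAut.conj (Pi.constMonoidHom (Fin d → Bool) G k)) from
    this hf
  refine Subgroup.closure_le _ |>.2 ?_
  rintro _ ⟨h, i, rfl⟩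
  refine Subgroup.subset_closure ⟨k * h * k⁻¹, i, ?_⟩
  funext ω
  by_cases hω : ω i = true <;> simp [hω]

/-- A generator `[h]_{ω i = 0}` is `[h⁻¹]_{ω i = 1} * h^[d]`. -/
lemma HK_le_FG_sup_diagonal : HK G d ≤ FG G d ⊔ diagonal G d := by
  refine Subgroup.closure_le _ |>.2 ?_
  rintro _ ⟨h, i, a, rfl⟩
  cases a with
  | true => exact Subgroup.mem_sup_left (Subgroup.subset_closure ⟨h, i, rfl⟩)
  | false =>
    have hsplit : (fun ω : Fin d → Bool => if ω i = false then h else 1) =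
        (fun ω => if ω i = true then h⁻¹ else 1) * fun _ => h := by
      funext ω
      cases hb : ω i <;> simp [hb]
    rw [hsplit]
    exact mul_mem (Subgroup.mem_sup_left (Subgroup.subset_closure ⟨h⁻¹, i, rfl⟩))
      (Subgroup.mem_sup_right (const_mem_diagonal h))

lemma HK_eq_FG_sup_diagonal (hd : 1 ≤ d) : HK G d = FG G d ⊔ diagonal G d :=
  le_antisymm HK_le_FG_sup_diagonal (sup_le FG_le_HK (diagonal_le_HK hd))

variable {X : Type*} [MulAction G X]

lemma cubeAct_mul_const (g : (Fin d → Bool) → G) (k : G) (x : X) :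
    cubeAct (g * fun _ => k) (fun _ => x) = cubeAct g (fun _ => k • x) := by
  funext ω
  simp [cubeAct, mul_smul]

lemma constTranslates_sup_diagonal (H : Subgroup ((Fin d → Bool) → G))
    (hH : diagonal G d ≤ Subgroup.normalizer (H : Set ((Fin d → Bool) → G))) :
    {c : (Fin d → Bool) → X |
        ∃ g ∈ H ⊔ diagonal G d, ∃ x : X, c = cubeAct g (fun _ => x)} =
      {c | ∃ g ∈ H, ∃ x : X, c = cubeAct g (fun _ => x)} := by
  ext c
  constructor
  · rintro ⟨g, hg, x, rfl⟩
    rw [← SetLike.mem_coe, Subgroup.coe_mul_of_right_le_normalizer_left H _ hH] at hg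
    obtain ⟨f, hf, _, ⟨k, rfl⟩, rfl⟩ := hg
    exact ⟨f, hf, k • x, cubeAct_mul_const f k x⟩
  · rintro ⟨g, hg, x, rfl⟩
    exact ⟨g, Subgroup.mem_sup_left hg, x, rfl⟩

lemma closure_constTranslates_eq_of_dense_orbit [TopologicalSpace X] [ContinuousConstSMul G X]
    {H : Subgroup ((Fin d → Bool) → G)} (hH : diagonal G d ≤ H) {x₀ : X}
    (hx₀ : Dense (MulAction.orbit G x₀)) :
    closure {c : (Fin d → Bool) → X | ∃ g ∈ H, ∃ x : X, c = cubeAct g (fun _ => x)} =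
      closure {c | ∃ g ∈ H, c = cubeAct g (fun _ => x₀)} := by
  refine le_antisymm (closure_minimal ?_ isClosed_closure)
    (closure_mono fun c ⟨g, hg, hc⟩ => ⟨g, hg, x₀, hc⟩)
  rintro _ ⟨g, hg, x, rfl⟩
  have hcont : Continuous fun y : X => cubeAct g (fun _ => y) :=
    continuous_pi fun ω => continuous_const_smul (g ω)
  have horbit : (fun y : X => cubeAct g (fun _ => y)) '' MulAction.orbit G x₀ ⊆
      {c | ∃ g ∈ H, c = cubeAct g (fun _ => x₀)} := by
    rintro _ ⟨_, ⟨k, rfl⟩, rfl⟩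
    exact ⟨g * fun _ => k, mul_mem hg (hH (const_mem_diagonal k)),
      (cubeAct_mul_const g k x₀).symm⟩
  exact closure_mono horbit <|
    image_closure_subset_closure_image hcont ⟨x, hx₀.closure_eq ▸ Set.mem_univ x, rfl⟩

end CubeGroup

open CubeGroup in
theorem cubeSpace_eq_orbit_closures_general
    {G X : Type*} [Group G] [TopologicalSpace G] [TopologicalSpace X]
    [MulAction G X] [ContinuousSMul G X]
    {d : ℕ} (hd : 1 ≤ d)
    (hmin : ∀ x : X, Dense (MulAction.orbit G x)) (x₀ : X) :
    cubeSpace G X d = closure {c | ∃ g ∈ HK G d, c = cubeAct g (fun _ => x₀)} ∧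
    cubeSpace G X d = closure {c | ∃ f ∈ FG G d, ∃ x : X, c = cubeAct f (fun _ => x)} := by
  have hHK := HK_eq_FG_sup_diagonal (G := G) hd
  refine ⟨closure_constTranslates_eq_of_dense_orbit (hHK ▸ le_sup_right) (hmin x₀), ?_⟩
  rw [cubeSpace, hHK, constTranslates_sup_diagonal _ diagonal_le_normalizer_FG]

/-- For `(G,X)` minimal, `C_G^[d](X)` is the closure of the `HK^[d]`-orbit of any
constant configuration `x₀^[d]`, and also the closure of the `F^[d]`-translates of
all constant configurations. -/
theorem cubeSpace_eq_orbit_closures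
    {G X : Type*} [Group G] [TopologicalSpace G] [IsTopologicalGroup G]
    [TopologicalSpace X] [CompactSpace X] [T2Space X]
    [MulAction G X] [ContinuousSMul G X]
    {d : ℕ} (hd : 1 ≤ d)
    (hmin : ∀ x : X, Dense (MulAction.orbit G x)) (x₀ : X) :
    cubeSpace G X d = closure {c | ∃ g ∈ HK G d, c = cubeAct g (fun _ => x₀)} ∧
    cubeSpace G X d = closure {c | ∃ f ∈ FG G d, ∃ x : X, c = cubeAct f (fun _ => x)} :=
  cubeSpace_eq_orbit_closures_general hd hmin x₀
end

section
/- Let (G,X) be a minimal topological dynamical system with X a compact metrizable space, and let d ≥ 1. Then there is a dense Gδ subset X₀ ⊆ X such that Y_x^[d](X) = C_x^[d](X) for every x ∈ X₀. -/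
/-!
For an open set `U` of cubes, the set `A_U` of base points `x` whose face orbit `F^[d] · x^[d]`
meets `U` is open, so its coborder `A_U ∪ (closure A_U)ᶜ` is residual. At a base point `x` lying
in the coborders of all basic open sets, a cube over `x` that is a limit of face-orbit points over
arbitrary base points is already a limit of points of the face orbit of `x` itself. Since
`HK^[d] = F^[d] · Δ(G)`, the cube space is the closure of the union of all face orbits, so
`C_x^[d] ⊆ Y_x^[d]` at such `x`.
-/
theorem eventually_residual_closure_iUnion_inter_fiber_subset
    {X Z : Type*} [TopologicalSpace X] [TopologicalSpace Z] [SecondCountableTopology Z]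
    {S : X → Set Z} (hS : ∀ U, IsOpen U → IsOpen {x | (S x ∩ U).Nonempty})
    {π : Z → X} (hπ : Continuous π) (hSπ : ∀ x, ∀ z ∈ S x, π z = x) :
    ∀ᶠ x in residual X, closure (⋃ y, S y) ∩ π ⁻¹' {x} ⊆ closure (S x) := by
  set B := TopologicalSpace.countableBasis Z
  have hB := TopologicalSpace.isBasis_countableBasis Z
  have hcob : ∀ᶠ x in residual X, ∀ U ∈ B, x ∈ coborder {y | (S y ∩ U).Nonempty} :=
    (eventually_countable_ball (TopologicalSpace.countable_countableBasis Z)).2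
      fun U hU => coborder_mem_residual (hS U (hB.isOpen hU)).isLocallyClosed
  filter_upwards [hcob] with x hx
  rintro z ⟨hz, rfl : π z = x⟩
  by_contra hzS
  obtain ⟨U, hU, hzU, hUS⟩ := hB.exists_subset_of_mem_open hzS isClosed_closure.isOpen_compl
  set A := {y | (S y ∩ U).Nonempty}
  have hzA : π z ∉ A := fun ⟨w, hwS, hwU⟩ => hUS hwU (subset_closure hwS)
  have hzA' : π z ∉ closure A := by
    have := hx U hU
    rw [coborder_eq_union_closure_compl] at this
    exact this.resolve_left hzA
  obtain ⟨w, ⟨hwU, hwA⟩, hw⟩ := mem_closure_iff.mp hz (U ∩ π ⁻¹' (closure A)ᶜ)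
    ((hB.isOpen hU).inter (isClosed_closure.isOpen_compl.preimage hπ)) ⟨hzU, hzA'⟩
  obtain ⟨y, hwy⟩ := Set.mem_iUnion.mp hw
  exact hwA (subset_closure (hSπ y w hwy ▸ ⟨w, hwy, hwU⟩))

section CubeGroups

variable {G : Type*} [Group G] {d : ℕ}

lemma apply_zero_of_mem_FG {f : (Fin d → Bool) → G} (hf : f ∈ FG G d) :
    f (fun _ => false) = 1 := by
  induction hf using Subgroup.closure_induction with
  | mem g hg => obtain ⟨h, i, rfl⟩ := hg; simp
  | one => rfl
  | mul x y _ _ hx hy => simp [hx, hy]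
  | inv x _ hx => simp [hx]

lemma FG_le_HK : FG G d ≤ HK G d :=
  Subgroup.closure_mono fun _ ⟨h, i, hg⟩ => ⟨h, i, true, hg⟩

lemma const_mul_mul_const_inv_mem_FG (h : G) {f : (Fin d → Bool) → G} (hf : f ∈ FG G d) :
    (fun _ => h) * f * (fun _ => h)⁻¹ ∈ FG G d := by
  have hconj : MulAut.conj (fun _ => h) f ∈ (FG G d).map (MulAut.conj fun _ => h).toMonoidHom :=
    ⟨f, hf, rfl⟩
  rw [FG, MonoidHom.map_closure] at hconj
  refine Subgroup.closure_mono ?_ hconj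
  rintro _ ⟨_, ⟨k, i, rfl⟩, rfl⟩
  refine ⟨h * k * h⁻¹, i, funext fun ω => ?_⟩
  by_cases hω : ω i = true <;> simp [hω]

lemma exists_mem_FG_eq_mul_const_of_mem_HK {g : (Fin d → Bool) → G} (hg : g ∈ HK G d) :
    ∃ f ∈ FG G d, ∃ h : G, g = f * fun _ => h := by
  induction hg using Subgroup.closure_induction with
  | mem g hg =>
    obtain ⟨k, i, a, rfl⟩ := hg
    cases a with
    | true => exact ⟨_, Subgroup.subset_closure ⟨k, i, rfl⟩, 1, (mul_one _).symm⟩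
    | false =>
      -- `[k]_{ω_i = 0} = [k⁻¹]_{ω_i = 1} · k^[d]`
      refine ⟨_, Subgroup.subset_closure ⟨k⁻¹, i, rfl⟩, k, funext fun ω => ?_⟩
      by_cases hω : ω i = true <;> simp [hω]
  | one => exact ⟨1, one_mem _, 1, (one_mul _).symm⟩
  | mul x y _ _ hx hy =>
    obtain ⟨f₁, hf₁, h₁, rfl⟩ := hx
    obtain ⟨f₂, hf₂, h₂, rfl⟩ := hy
    refine ⟨f₁ * ((fun _ => h₁) * f₂ * (fun _ => h₁)⁻¹),
      mul_mem hf₁ (const_mul_mul_const_inv_mem_FG h₁ hf₂), h₁ * h₂, ?_⟩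
    rw [show (fun _ : Fin d → Bool => h₁ * h₂) = (fun _ => h₁) * (fun _ => h₂) from rfl]
    group
  | inv x _ hx =>
    obtain ⟨f, hf, h, rfl⟩ := hx
    refine ⟨(fun _ => h⁻¹) * f⁻¹ * (fun _ => h⁻¹)⁻¹,
      const_mul_mul_const_inv_mem_FG h⁻¹ (inv_mem hf), h⁻¹, ?_⟩
    rw [show (fun _ : Fin d → Bool => h⁻¹) = (fun _ => h)⁻¹ from rfl]
    group

end CubeGroups

section FaceOrbit

variable (G : Type*) {X : Type*} [Group G] [MulAction G X] (d : ℕ)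

def faceOrbit (x : X) : Set ((Fin d → Bool) → X) :=
  {c | ∃ f ∈ FG G d, c = cubeAct f (fun _ => x)}

variable {G d}

lemma apply_zero_of_mem_faceOrbit {x : X} {c : (Fin d → Bool) → X} (hc : c ∈ faceOrbit G d x) :
    c (fun _ => false) = x := by
  obtain ⟨f, hf, rfl⟩ := hc
  simp [cubeAct, apply_zero_of_mem_FG hf]

variable [TopologicalSpace X]

lemma isOpen_setOf_faceOrbit_inter_nonempty [ContinuousConstSMul G X]
    {U : Set ((Fin d → Bool) → X)} (hU : IsOpen U) :
    IsOpen {x : X | (faceOrbit G d x ∩ U).Nonempty} := by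
  have hunion : {x : X | (faceOrbit G d x ∩ U).Nonempty} =
      ⋃ f ∈ FG G d, (fun x : X => cubeAct f fun _ => x) ⁻¹' U := by
    ext x
    simp [faceOrbit, Set.Nonempty]
  rw [hunion]
  exact isOpen_biUnion fun f _ =>
    hU.preimage (continuous_pi fun ω => continuous_const_smul (f ω))

lemma cubeSpace_subset_closure_iUnion_faceOrbit :
    cubeSpace G X d ⊆ closure (⋃ x, faceOrbit G d x) := by
  refine closure_mono ?_
  rintro _ ⟨g, hg, x, rfl⟩
  obtain ⟨f, hf, h, rfl⟩ := exists_mem_FG_eq_mul_const_of_mem_HK hg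
  refine Set.mem_iUnion.2 ⟨h • x, f, hf, funext fun ω => ?_⟩
  simp [cubeAct, mul_smul]

lemma Yx_subset_Cx [T1Space X] (x : X) : Yx G d x ⊆ Cx G d x := by
  intro c hc
  refine ⟨closure_mono ?_ hc, ?_⟩
  · rintro _ ⟨f, hf, rfl⟩
    exact ⟨f, FG_le_HK hf, x, rfl⟩
  · exact closure_minimal (fun c' hc' => apply_zero_of_mem_faceOrbit hc')
      (isClosed_singleton.preimage (continuous_apply _)) hc

end FaceOrbit

theorem Yx_eq_Cx_generic_general
    {G X : Type*} [Group G] [TopologicalSpace G]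
    [TopologicalSpace X] [CompactSpace X]
    [MulAction G X] [ContinuousSMul G X]
    [TopologicalSpace.MetrizableSpace X]
    {d : ℕ} :
    ∃ X₀ : Set X, Dense X₀ ∧ IsGδ X₀ ∧ ∀ x ∈ X₀, Yx G d x = Cx G d x := by
  obtain ⟨X₀, hgeneric, hGδ, hdense⟩ := mem_residual.1 <|
    eventually_residual_closure_iUnion_inter_fiber_subset
      (fun _ => isOpen_setOf_faceOrbit_inter_nonempty (G := G))
      (X := X) (π := fun c => c fun _ => false) (continuous_apply _)
      fun _ _ => apply_zero_of_mem_faceOrbit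
  refine ⟨X₀, hdense, hGδ, fun x hx => (Yx_subset_Cx x).antisymm fun c hc => ?_⟩
  exact hgeneric hx ⟨cubeSpace_subset_closure_iUnion_faceOrbit hc.1, hc.2⟩

/-- For a minimal t.d.s. on a compact metrizable space, `Y_x^[d](X) = C_x^[d](X)` for
all `x` in a dense `Gδ` subset of `X`. -/
theorem Yx_eq_Cx_generic
    {G X : Type*} [Group G] [TopologicalSpace G] [IsTopologicalGroup G]
    [TopologicalSpace X] [CompactSpace X] [T2Space X]
    [MulAction G X] [ContinuousSMul G X]
    [TopologicalSpace.MetrizableSpace X]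
    {d : ℕ} (hd : 1 ≤ d)
    (hmin : ∀ x : X, Dense (MulAction.orbit G x)) :
    ∃ X₀ : Set X, Dense X₀ ∧ IsGδ X₀ ∧ ∀ x ∈ X₀, Yx G d x = Cx G d x :=
  Yx_eq_Cx_generic_general
end

section
/- Let (G,X) be a minimal topological dynamical system, let d ≥ 1, and let φ:(G,X)→(G,Y) be a dynamical morphism onto a t.d.s. (G,Y) for which NRP^[d](Y) equals the diagonal of Y × Y. Then φ(x) = φ(y) for every (x,y) ∈ NRP^[d](X); consequently φ factors through the quotient of X by NRP^[d](X). -/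
/-! A continuous equivariant map sends Host–Kra translates of constant cubes to Host–Kra
translates of constant cubes, hence, by continuity, cubespace to cubespace; it also sends
lower corners to lower corners. So it maps `NRP^[d](X)` into `NRP^[d](Y)`, which is the
diagonal by assumption. -/

section CubeMap

variable {G X Y : Type*} [Group G] [MulAction G X] [MulAction G Y] {φ : X → Y}

theorem comp_cubeAct (hequiv : ∀ (g : G) (x : X), φ (g • x) = g • φ x) {d : ℕ}
    (g : (Fin d → Bool) → G) (c : (Fin d → Bool) → X) :
    φ ∘ cubeAct g c = cubeAct g (φ ∘ c) :=
  funext fun ω => hequiv (g ω) (c ω)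

theorem comp_lowerCorner (d : ℕ) (x y : X) :
    φ ∘ lowerCorner d x y = lowerCorner d (φ x) (φ y) :=
  funext fun ω => by by_cases h : ω = fun _ => true <;> simp [lowerCorner, h]

variable [TopologicalSpace X] [TopologicalSpace Y]

theorem comp_mem_cubeSpace (hcont : Continuous φ)
    (hequiv : ∀ (g : G) (x : X), φ (g • x) = g • φ x) {d : ℕ}
    {c : (Fin d → Bool) → X} (hc : c ∈ cubeSpace G X d) :
    φ ∘ c ∈ cubeSpace G Y d := by
  have hcomp : Continuous fun c : (Fin d → Bool) → X => φ ∘ c :=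
    continuous_pi fun ω => hcont.comp (continuous_apply ω)
  refine closure_mono ?_ (image_closure_subset_closure_image hcomp ⟨c, hc, rfl⟩)
  rintro _ ⟨_, ⟨g, hg, x, rfl⟩, rfl⟩
  exact ⟨g, hg, φ x, comp_cubeAct hequiv g _⟩

theorem map_mem_NRP (hcont : Continuous φ)
    (hequiv : ∀ (g : G) (x : X), φ (g • x) = g • φ x) {d : ℕ} {x y : X}
    (hxy : (x, y) ∈ NRP G X d) : (φ x, φ y) ∈ NRP G Y d := by
  have h := comp_mem_cubeSpace hcont hequiv hxy
  rwa [comp_lowerCorner] at h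

end CubeMap

theorem factor_through_NRP_quotient_general
    {G X : Type*} [Group G] [TopologicalSpace X] [MulAction G X]
    {Y : Type*} [TopologicalSpace Y] [MulAction G Y] {d : ℕ}
    (φ : X → Y) (hcont : Continuous φ)
    (hequiv : ∀ (g : G) (x : X), φ (g • x) = g • φ x)
    (hY : NRP G Y d = {p : Y × Y | p.1 = p.2}) :
    ∀ x y : X, (x, y) ∈ NRP G X d → φ x = φ y := by
  intro x y hxy
  have h := map_mem_NRP hcont hequiv hxy
  rwa [hY] at h

/-- If `(G,Y)` is a factor with trivial `NRP^[d]`, then the factor map collapses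
`NRP^[d](X)`; consequently it factors through `X/NRP^[d](X)`. -/
theorem factor_through_NRP_quotient
    {G X : Type*} [Group G] [TopologicalSpace G] [IsTopologicalGroup G]
    [TopologicalSpace X] [CompactSpace X] [T2Space X]
    [MulAction G X] [ContinuousSMul G X]
    {Y : Type*} [TopologicalSpace Y] [CompactSpace Y] [T2Space Y]
    [MulAction G Y] [ContinuousSMul G Y]
    {d : ℕ} (hd : 1 ≤ d)
    (hmin : ∀ x : X, Dense (MulAction.orbit G x))
    (φ : X → Y) (hcont : Continuous φ) (hsurj : Function.Surjective φ)
    (hequiv : ∀ (g : G) (x : X), φ (g • x) = g • φ x)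
    (hY : NRP G Y d = {p : Y × Y | p.1 = p.2}) :
    ∀ x y : X, (x, y) ∈ NRP G X d → φ x = φ y :=
  factor_through_NRP_quotient_general φ hcont hequiv hY
end

section
/- Let (G,X) be a minimal topological dynamical system. Then the regionally proximal relation is contained in the nilpotent regionally proximal relation of order one: Q(X) ⊆ NRP^[1](X). -/
/-!
Let `(x, y) ∈ Q(X)` with common limit `z`, and fix open neighbourhoods `A ∋ x`, `B ∋ y`. Moving `z` into `A` by some element of `G`
(minimality), regional proximality yields `x' ∈ A`, `y' ∈ B` and `u ∈ G` with `u x', u y' ∈ A`.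
Minimality again gives `v` with `v y' ∈ A ∩ u⁻¹ A`, a set that contains `x'` and so is nonempty.
The cube `[u]_{ω₀ = 0} [v]_{ω₁ = 0} · y'^[2]` then takes the values `u v y', v y', u y' ∈ A` and
`y' ∈ B`, so it lies in the neighbourhood `A × A × A × B` of `⌞^[2](x, y)`.
-/

open Filter Set Topology

/-- `Q(X)`, with the nets `xᵢ → x`, `yᵢ → y`, `gᵢ xᵢ → z`, `gᵢ yᵢ → z` encoded as
`((x, y), (z, z))` lying in the closure of the union of the graphs of `g` acting diagonally on `X × X`. -/
def regionallyProximal (G X : Type*) [SMul G X] [TopologicalSpace X] : Set (X × X) :=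
  {p | ∃ z : X, ((p.1, p.2), (z, z)) ∈
    closure {q : (X × X) × (X × X) | ∃ (x' y' : X) (g : G), q = ((x', y'), (g • x', g • y'))}}

section Cubes

variable {G : Type*} [Group G] {d : ℕ}

/-- `[h]_F` for the hyperface `F = {ω | ω i = a}`. -/
def faceElt (h : G) (i : Fin d) (a : Bool) : (Fin d → Bool) → G :=
  fun ω => if ω i = a then h else 1

theorem faceElt_mem_HK (h : G) (i : Fin d) (a : Bool) : faceElt h i a ∈ HK G d :=
  Subgroup.subset_closure ⟨h, i, a, rfl⟩

theorem lowerCorner_mem_closure {X : Type*} [TopologicalSpace X] {x y : X}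
    {S : Set ((Fin d → Bool) → X)}
    (h : ∀ A B : Set X, IsOpen A → IsOpen B → x ∈ A → y ∈ B →
      (S ∩ univ.pi (lowerCorner d A B)).Nonempty) :
    lowerCorner d x y ∈ closure S := by
  refine mem_closure_iff_nhds.2 fun N hN => ?_
  rw [nhds_pi, Filter.mem_pi] at hN
  obtain ⟨I, -, t, ht, htN⟩ := hN
  have hA : (⋂ ω ∈ {ω : Fin d → Bool | ω ≠ fun _ => true}, t ω) ∈ 𝓝 x :=
    (biInter_mem (toFinite _)).2 fun ω (hω : ω ≠ _) => by simpa [lowerCorner, hω] using ht ω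
  have hB : t (fun _ => true) ∈ 𝓝 y := by simpa [lowerCorner] using ht fun _ => true
  obtain ⟨A, hAt, hAo, hxA⟩ := mem_nhds_iff.1 hA
  obtain ⟨B, hBt, hBo, hyB⟩ := mem_nhds_iff.1 hB
  obtain ⟨c, hcS, hc⟩ := h A B hAo hBo hxA hyB
  refine ⟨c, htN fun ω _ => ?_, hcS⟩
  have hcω := hc ω trivial
  by_cases hω : ω = fun _ => true
  · subst hω
    simp only [lowerCorner, if_pos] at hcω
    exact hBt hcω
  · simp only [lowerCorner, if_neg hω] at hcω
    exact mem_iInter₂.1 (hAt hcω) ω hω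

variable {X : Type*} [MulAction G X]

theorem cubeAct_faceElt_mul_faceElt_mem_pi_lowerCorner {u v : G} {w : X} {A B : Set X} (hw : w ∈ B)
    (hu : u • w ∈ A) (hv : v • w ∈ A) (huv : u • v • w ∈ A) :
    cubeAct (faceElt u 0 false * faceElt v 1 false) (fun _ => w) ∈
      univ.pi (lowerCorner 2 A B) := by
  intro ω _
  obtain ⟨a, b, rfl⟩ : ∃ a b, ω = ![a, b] := ⟨ω 0, ω 1, funext fun i => by fin_cases i <;> rfl⟩
  cases a <;> cases b <;>
    simp [cubeAct, faceElt, lowerCorner, funext_iff, Fin.forall_fin_two, mul_smul, *]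

end Cubes

section Minimal

variable {G X : Type*} [Group G] [MulAction G X] [TopologicalSpace X] [ContinuousConstSMul G X]

theorem exists_smul_mem_of_mem_regionallyProximal (hmin : ∀ x : X, Dense (MulAction.orbit G x))
    {x y : X} (hxy : (x, y) ∈ regionallyProximal G X) {A B : Set X} (hA : IsOpen A)
    (hB : IsOpen B) (hxA : x ∈ A) (hyB : y ∈ B) :
    ∃ x' ∈ A, ∃ y' ∈ B, ∃ u : G, u • x' ∈ A ∧ u • y' ∈ A := by
  obtain ⟨z, hz⟩ := hxy
  obtain ⟨_, ⟨q, rfl⟩, hqz⟩ := (hmin z).exists_mem_open hA ⟨x, hxA⟩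
  have hW : IsOpen ((q • ·) ⁻¹' A) := hA.preimage (continuous_const_smul q)
  obtain ⟨_, ⟨⟨hx'A, hy'B⟩, hgx', hgy'⟩, x', y', g, rfl⟩ := mem_closure_iff_nhds.1 hz _
    (((hA.prod hB).prod (hW.prod hW)).mem_nhds ⟨⟨hxA, hyB⟩, hqz, hqz⟩)
  exact ⟨x', hx'A, y', hy'B, q * g, by rwa [mul_smul], by rwa [mul_smul]⟩

theorem exists_smul_mem_and_smul_smul_mem (hmin : ∀ x : X, Dense (MulAction.orbit G x))
    {A : Set X} (hA : IsOpen A) {x' : X} (hx' : x' ∈ A) {u : G} (hux' : u • x' ∈ A) (y' : X) :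
    ∃ v : G, v • y' ∈ A ∧ u • v • y' ∈ A := by
  obtain ⟨_, ⟨v, rfl⟩, hv⟩ :=
    (hmin y').exists_mem_open (hA.inter (hA.preimage (continuous_const_smul u))) ⟨x', hx', hux'⟩
  exact ⟨v, hv⟩

end Minimal

theorem Q_subset_NRP_one_general
    {G X : Type*} [Group G] [TopologicalSpace G]
    [TopologicalSpace X]
    [MulAction G X] [ContinuousSMul G X]
    (hmin : ∀ x : X, Dense (MulAction.orbit G x)) :
    {p : X × X | ∃ z : X, ((p.1, p.2), (z, z)) ∈
      closure {q : (X × X) × (X × X) | ∃ (x' y' : X) (g : G),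
        q = ((x', y'), (g • x', g • y'))}} ⊆ NRP G X 1 := by
  rintro ⟨x, y⟩ hxy
  refine lowerCorner_mem_closure fun A B hA hB hxA hyB => ?_
  obtain ⟨x', hx'A, y', hy'B, u, hux', huy'⟩ :=
    exists_smul_mem_of_mem_regionallyProximal hmin hxy hA hB hxA hyB
  obtain ⟨v, hv, huv⟩ := exists_smul_mem_and_smul_smul_mem hmin hA hx'A hux' y'
  exact ⟨_, ⟨_, mul_mem (faceElt_mem_HK u 0 false) (faceElt_mem_HK v 1 false), y', rfl⟩,
    cubeAct_faceElt_mul_faceElt_mem_pi_lowerCorner hy'B huy' hv huv⟩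

/-- The regionally proximal relation `Q(X)` is contained in `NRP^[1](X)` for minimal
systems.  Here `(x,y) ∈ Q(X)` is expressed by the equivalent closure condition:
there is `z` with `((x,y),(z,z))` in the closure of
`{((x',y'),(g•x',g•y'))}`, which encodes the existence of nets `xᵢ → x`, `yᵢ → y`,
`gᵢ` with `gᵢxᵢ → z` and `gᵢyᵢ → z`. -/
theorem Q_subset_NRP_one
    {G X : Type*} [Group G] [TopologicalSpace G] [IsTopologicalGroup G]
    [TopologicalSpace X] [CompactSpace X] [T2Space X]
    [MulAction G X] [ContinuousSMul G X]
    (hmin : ∀ x : X, Dense (MulAction.orbit G x)) :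
    {p : X × X | ∃ z : X, ((p.1, p.2), (z, z)) ∈
      closure {q : (X × X) × (X × X) | ∃ (x' y' : X) (g : G),
        q = ((x', y'), (g • x', g • y'))}} ⊆ NRP G X 1 :=
  Q_subset_NRP_one_general hmin
end
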